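/- arXiv:1502.06137 — 3 statements merged into one kernel-verified Lean document; each statement's English description precedes it below -/
import Mathlib

section
/- Let G be a graph of diameter at most two on vertices {1,…,n}, let D ∈ (0, π), and suppose real numbers φ_1,…,φ_n satisfy φ_l ≤ φ_i ≤ φ_k for all i, with φ_k − φ_l = D, where k and l are two fixed (not necessarily distinct-role) vertices. Then Σ_{i ∈ N_k} sin(φ_k − φ_i) + Σ_{j ∈ N_l} sin(φ_j − φ_l) ≥ P_{kl} · sin(D), where P_{kl} = (number of common neighbors of k and l) + 2·A_{kl}. -/
/-!
Write `a i = sin (φ k - φ i)` and `b j = sin (φ j - φ l)`; all these phase gaps lie in `[0, D] ⊆ [0, π]`,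
so every summand is nonnegative and the two sums only decrease when restricted to the common
neighbours of `k` and `l` (plus, if `k ~ l`, the terms `a l = b k = sin D`). For a common neighbour
`m` the two gaps add up to `D`, and `sin` is subadditive on nonnegative-sine arguments, so
`a m + b m ≥ sin D`.
-/

open Real Finset

theorem Real.sin_add_le_sin_add_sin {x y : ℝ} (hx : 0 ≤ sin x) (hy : 0 ≤ sin y) :
    sin (x + y) ≤ sin x + sin y := by
  rw [sin_add]
  nlinarith [cos_le_one x, cos_le_one y]

namespace SimpleGraph

variable {V : Type*} [DecidableEq V] (G : SimpleGraph V) [G.LocallyFinite] [DecidableRel G.Adj]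

theorem sum_inter_neighborFinset_add_ite_le {M : Type*} [AddCommMonoid M] [PartialOrder M]
    [IsOrderedAddMonoid M] {a : V → M} (ha : ∀ i, 0 ≤ a i) (k l : V) :
    ∑ m ∈ G.neighborFinset k ∩ G.neighborFinset l, a m + (if G.Adj k l then a l else 0)
      ≤ ∑ i ∈ G.neighborFinset k, a i := by
  split_ifs with hadj
  · have hl : l ∉ G.neighborFinset k ∩ G.neighborFinset l := by simp
    rw [add_comm, ← sum_insert hl]
    exact sum_le_sum_of_subset_of_nonneg
      (insert_subset (by simpa using hadj) inter_subset_left) fun i _ _ ↦ ha i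
  · simpa using sum_le_sum_of_subset_of_nonneg inter_subset_left fun i _ _ ↦ ha i

end SimpleGraph

theorem sum_sin_ge_P_sin_general (n : ℕ) (G : SimpleGraph (Fin n)) [DecidableRel G.Adj]
    (D : ℝ) (hDπ : D < π)
    (φ : Fin n → ℝ) (k l : Fin n)
    (hφ : ∀ i, φ l ≤ φ i ∧ φ i ≤ φ k) (hkl : φ k - φ l = D) :
    ∑ i ∈ G.neighborFinset k, Real.sin (φ k - φ i)
      + ∑ j ∈ G.neighborFinset l, Real.sin (φ j - φ l)
    ≥ (((G.neighborFinset k ∩ G.neighborFinset l).card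
        + 2 * (if G.Adj k l then 1 else 0) : ℕ) : ℝ) * Real.sin D := by
  have gap_nonneg {x y : ℝ} (hx : φ l ≤ x) (hy : y ≤ φ k) (hxy : x ≤ y) : 0 ≤ sin (y - x) :=
    sin_nonneg_of_nonneg_of_le_pi (by linarith) (by linarith)
  have ha i : 0 ≤ sin (φ k - φ i) := gap_nonneg (hφ i).1 le_rfl (hφ i).2
  have hb j : 0 ≤ sin (φ j - φ l) := gap_nonneg le_rfl (hφ j).2 (hφ j).1
  have hcommon : (G.neighborFinset k ∩ G.neighborFinset l).card • sin D
      ≤ ∑ m ∈ G.neighborFinset k ∩ G.neighborFinset l, (sin (φ k - φ m) + sin (φ m - φ l)) :=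
    card_nsmul_le_sum _ _ _ fun m _ ↦ by
      simpa [← hkl] using sin_add_le_sin_add_sin (ha m) (hb m)
  have hk := G.sum_inter_neighborFinset_add_ite_le ha k l
  have hl := G.sum_inter_neighborFinset_add_ite_le hb l k
  rw [inter_comm] at hl
  simp only [G.adj_comm l k] at hl
  rw [sum_add_distrib, nsmul_eq_mul] at hcommon
  rw [hkl] at hk hl
  split_ifs at hk hl ⊢ <;> push_cast <;> linarith

theorem sum_sin_ge_P_sin (n : ℕ) (G : SimpleGraph (Fin n)) [DecidableRel G.Adj]
    (hdiam : ∀ i j : Fin n, i ≠ j → G.Adj i j ∨ ∃ m, G.Adj i m ∧ G.Adj m j)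
    (D : ℝ) (hD0 : 0 < D) (hDπ : D < π)
    (φ : Fin n → ℝ) (k l : Fin n)
    (hφ : ∀ i, φ l ≤ φ i ∧ φ i ≤ φ k) (hkl : φ k - φ l = D) :
    ∑ i ∈ G.neighborFinset k, Real.sin (φ k - φ i)
      + ∑ j ∈ G.neighborFinset l, Real.sin (φ j - φ l)
    ≥ (((G.neighborFinset k ∩ G.neighborFinset l).card
        + 2 * (if G.Adj k l then 1 else 0) : ℕ) : ℝ) * Real.sin D :=
  sum_sin_ge_P_sin_general n G D hDπ φ k l hφ hkl
end

section
/- Let G be a graph of diameter at most two, D ∈ (0, π), and suppose the coupling strength K satisfies K ≥ n·|ω̄_i − ω̄_j| / (P_{ij}·sin D) for all pairs i, j. Then whenever the phases satisfy φ_l ≤ φ_i ≤ φ_k for all i with φ_k − φ_l = D, the instantaneous rates of the system φ̇_i = ω̄_i + (K/n) Σ_{j ∈ N_i} sin(φ_j − φ_i) satisfy φ̇_k − φ̇_l ≤ 0. -/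
/-!
With closed neighbourhoods `N[v] = insert v (N v)`, the weight `P_kl` is `#(N[k] ∩ N[l])` for
`k ≠ l`, and diameter at most two makes it positive. Since all phases lie in the arc
`[φ l, φ k]` of length `D < π`, every term `sin (φ j - φ k)` is `≤ 0` and every
`sin (φ j - φ l)` is `≥ 0`, so both coupling sums may be extended to closed neighbourhoods and
truncated to their intersection. On it, subadditivity of `sin` on `[0, π]` bounds each term of
the difference by `-sin D`, so the coupling difference is at most `-(K / n) P_kl sin D`, which
the hypothesis on `K` makes dominate `ω k - ω l`.
-/

open Real Finset

theorem Real.sin_add_le_sin_add_sin_s9 {a b : ℝ} (ha : 0 ≤ a) (hb : 0 ≤ b) (hab : a + b ≤ π) :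
    sin (a + b) ≤ sin a + sin b := by
  have hsa : 0 ≤ sin a := sin_nonneg_of_nonneg_of_le_pi ha (by linarith)
  have hsb : 0 ≤ sin b := sin_nonneg_of_nonneg_of_le_pi hb (by linarith)
  rw [sin_add]
  nlinarith [cos_le_one a, cos_le_one b]

theorem Real.sin_sub_sub_sin_sub_le {a b x : ℝ} (hax : a ≤ x) (hxb : x ≤ b) (hba : b - a ≤ π) :
    sin (x - b) - sin (x - a) ≤ -sin (b - a) := by
  have h := sin_add_le_sin_add_sin_s9 (sub_nonneg.2 hxb) (sub_nonneg.2 hax) (by linarith)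
  rw [sub_add_sub_cancel] at h
  rw [← neg_sub b x, sin_neg]
  linarith

theorem Finset.sum_sub_sum_le_sum_inter {ι M : Type*} [DecidableEq ι] [AddCommGroup M]
    [PartialOrder M] [IsOrderedAddMonoid M] {s t : Finset ι} {f g : ι → M}
    (hf : ∀ i ∈ s, f i ≤ 0) (hg : ∀ i ∈ t, 0 ≤ g i) :
    ∑ i ∈ s, f i - ∑ i ∈ t, g i ≤ ∑ i ∈ s ∩ t, (f i - g i) := by
  have hfs : ∑ i ∈ s, f i ≤ ∑ i ∈ s ∩ t, f i := by
    rw [← sum_inter_add_sum_sdiff s t f]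
    exact add_le_of_le_of_nonpos le_rfl (sum_nonpos fun i hi => hf i (mem_sdiff.1 hi).1)
  have hgt : ∑ i ∈ s ∩ t, g i ≤ ∑ i ∈ t, g i :=
    sum_le_sum_of_subset_of_nonneg inter_subset_right fun i hi _ => hg i hi
  rw [sum_sub_distrib]
  exact sub_le_sub hfs hgt

namespace SimpleGraph

variable {V : Type*} [Fintype V] [DecidableEq V] (G : SimpleGraph V) [DecidableRel G.Adj]

def closedNeighborFinset (v : V) : Finset V := insert v (G.neighborFinset v)

variable {G}

theorem sum_neighborFinset_eq_sum_closedNeighborFinset {M : Type*} [AddCommMonoid M]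
    {f : V → M} {v : V} (hv : f v = 0) :
    ∑ w ∈ G.neighborFinset v, f w = ∑ w ∈ G.closedNeighborFinset v, f w := by
  rw [closedNeighborFinset, sum_insert (G.notMem_neighborFinset_self v), hv, zero_add]

theorem closedNeighborFinset_inter_nonempty {v w : V}
    (h : G.Adj v w ∨ ∃ m, G.Adj v m ∧ G.Adj m w) :
    (G.closedNeighborFinset v ∩ G.closedNeighborFinset w).Nonempty := by
  rcases h with hvw | ⟨m, hvm, hmw⟩
  · exact ⟨v, by simp [closedNeighborFinset, hvw.symm]⟩
  · exact ⟨m, by simp [closedNeighborFinset, hvm, hmw.symm]⟩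

theorem card_closedNeighborFinset_inter {v w : V} (hvw : v ≠ w) :
    #(G.closedNeighborFinset v ∩ G.closedNeighborFinset w)
      = #(G.neighborFinset v ∩ G.neighborFinset w) + 2 * (if G.Adj v w then 1 else 0) := by
  by_cases hadj : G.Adj v w
  · have hsplit : G.closedNeighborFinset v ∩ G.closedNeighborFinset w
        = insert v (insert w (G.neighborFinset v ∩ G.neighborFinset w)) := by
      ext x
      simp only [closedNeighborFinset, mem_inter, mem_insert, mem_neighborFinset]
      constructor
      · rintro ⟨rfl | hvx, rfl | hwx⟩ <;> tauto
      · rintro (rfl | rfl | ⟨hvx, hwx⟩) <;> simp_all [G.adj_comm]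
    rw [hsplit, card_insert_of_notMem (by simp [hvw]), card_insert_of_notMem (by simp)]
    simp [hadj]
  · have hsplit : G.closedNeighborFinset v ∩ G.closedNeighborFinset w
        = G.neighborFinset v ∩ G.neighborFinset w := by
      ext x
      simp only [closedNeighborFinset, mem_inter, mem_insert, mem_neighborFinset]
      constructor
      · rintro ⟨rfl | hvx, rfl | hwx⟩ <;> simp_all [G.adj_comm]
      · tauto
    simp [hsplit, hadj]

variable (G) in
theorem sum_sin_sub_sub_sum_sin_sub_le (φ : V → ℝ) {k l : V}
    (hφ : ∀ i, φ l ≤ φ i ∧ φ i ≤ φ k) (hπ : φ k - φ l ≤ π) :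
    ∑ j ∈ G.neighborFinset k, sin (φ j - φ k) - ∑ j ∈ G.neighborFinset l, sin (φ j - φ l)
      ≤ -(#(G.closedNeighborFinset k ∩ G.closedNeighborFinset l) * sin (φ k - φ l)) := by
  rw [sum_neighborFinset_eq_sum_closedNeighborFinset (by simp),
    sum_neighborFinset_eq_sum_closedNeighborFinset (f := fun j => sin (φ j - φ l)) (by simp)]
  have hk : ∀ j, sin (φ j - φ k) ≤ 0 := fun j =>
    sin_nonpos_of_nonpos_of_neg_pi_le (by linarith [hφ j]) (by linarith [hφ j])
  have hl : ∀ j, 0 ≤ sin (φ j - φ l) := fun j =>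
    sin_nonneg_of_nonneg_of_le_pi (by linarith [hφ j]) (by linarith [hφ j])
  calc _ ≤ ∑ j ∈ G.closedNeighborFinset k ∩ G.closedNeighborFinset l,
          (sin (φ j - φ k) - sin (φ j - φ l)) :=
        sum_sub_sum_le_sum_inter (fun j _ => hk j) (fun j _ => hl j)
    _ ≤ ∑ _j ∈ G.closedNeighborFinset k ∩ G.closedNeighborFinset l, -sin (φ k - φ l) :=
        sum_le_sum fun j _ => sin_sub_sub_sin_sub_le (hφ j).1 (hφ j).2 hπ
    _ = _ := by rw [sum_const, nsmul_eq_mul, mul_neg]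

end SimpleGraph

theorem rate_diff_nonpos_of_K_bound_general (n : ℕ)
    (G : SimpleGraph (Fin n)) [DecidableRel G.Adj]
    (hdiam : ∀ i j : Fin n, i ≠ j → G.Adj i j ∨ ∃ m, G.Adj i m ∧ G.Adj m j)
    (D : ℝ) (hD0 : 0 < D) (hDπ : D < π)
    (ω : Fin n → ℝ) (K : ℝ)
    (hK : ∀ i j : Fin n, K ≥ (n : ℝ) * |ω i - ω j| /
        ((((G.neighborFinset i ∩ G.neighborFinset j).card
            + 2 * (if G.Adj i j then 1 else 0) : ℕ) : ℝ) * Real.sin D))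
    (φ : Fin n → ℝ) (k l : Fin n)
    (hφ : ∀ i, φ l ≤ φ i ∧ φ i ≤ φ k) (hkl : φ k - φ l = D) :
    (ω k + K / n * ∑ j ∈ G.neighborFinset k, Real.sin (φ j - φ k))
      - (ω l + K / n * ∑ j ∈ G.neighborFinset l, Real.sin (φ j - φ l)) ≤ 0 := by
  have hkl_ne : k ≠ l := by rintro rfl; simp at hkl; linarith
  have hn : (0 : ℝ) < n := by exact_mod_cast k.pos
  have hK0 : 0 ≤ K := by simpa using hK k k
  set P : ℝ := ((G.closedNeighborFinset k ∩ G.closedNeighborFinset l).card : ℝ) with hP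
  have hPsin : 0 < P * sin D := by
    have hP0 := (G.closedNeighborFinset_inter_nonempty (hdiam k l hkl_ne)).card_pos
    exact mul_pos (by rw [hP]; exact_mod_cast hP0) (sin_pos_of_pos_of_lt_pi hD0 hDπ)
  have hfreq : ω k - ω l ≤ K / n * (P * sin D) := by
    have h := hK k l
    rw [← G.card_closedNeighborFinset_inter hkl_ne, ← hP, ge_iff_le, div_le_iff₀ hPsin] at h
    rw [div_mul_eq_mul_div, le_div_iff₀ hn]
    nlinarith [le_abs_self (ω k - ω l)]
  have hcoupling := G.sum_sin_sub_sub_sum_sin_sub_le φ hφ (hkl ▸ hDπ.le)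
  rw [hkl, ← hP] at hcoupling
  linear_combination hfreq + mul_le_mul_of_nonneg_left hcoupling (div_nonneg hK0 hn.le)

theorem rate_diff_nonpos_of_K_bound (n : ℕ) (hn : 0 < n)
    (G : SimpleGraph (Fin n)) [DecidableRel G.Adj]
    (hdiam : ∀ i j : Fin n, i ≠ j → G.Adj i j ∨ ∃ m, G.Adj i m ∧ G.Adj m j)
    (D : ℝ) (hD0 : 0 < D) (hDπ : D < π)
    (ω : Fin n → ℝ) (K : ℝ)
    (hK : ∀ i j : Fin n, K ≥ (n : ℝ) * |ω i - ω j| /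
        ((((G.neighborFinset i ∩ G.neighborFinset j).card
            + 2 * (if G.Adj i j then 1 else 0) : ℕ) : ℝ) * Real.sin D))
    (φ : Fin n → ℝ) (k l : Fin n)
    (hφ : ∀ i, φ l ≤ φ i ∧ φ i ≤ φ k) (hkl : φ k - φ l = D) :
    (ω k + K / n * ∑ j ∈ G.neighborFinset k, Real.sin (φ j - φ k))
      - (ω l + K / n * ∑ j ∈ G.neighborFinset l, Real.sin (φ j - φ l)) ≤ 0 :=
  rate_diff_nonpos_of_K_bound_general n G hdiam D hD0 hDπ ω K hK φ k l hφ hkl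
end

section
/- Suppose vertices k and l of a graph G are adjacent and ω̄_k = ω̄_l. If the phases satisfy φ_l ≤ φ_i ≤ φ_k for all i and 0 < φ_k − φ_l < π, then for the system φ̇_i = ω̄_i + Σ_{j ∈ N_i} (K_{ij}/n) sin(φ_j − φ_i) with nonnegative symmetric couplings, one has φ̇_k − φ̇_l ≤ 0. -/
open Real Finset

section CouplingSums

variable {ι : Type*} (s : Finset ι) {c θ : ι → ℝ} {x : ℝ}

theorem sum_mul_sin_sub_nonpos_of_le (hc : ∀ j ∈ s, 0 ≤ c j)
    (hθ : ∀ j ∈ s, x - π ≤ θ j ∧ θ j ≤ x) :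
    ∑ j ∈ s, c j * sin (θ j - x) ≤ 0 :=
  sum_nonpos fun j hj => mul_nonpos_of_nonneg_of_nonpos (hc j hj)
    (sin_nonpos_of_nonpos_of_neg_pi_le (by linarith [hθ j hj]) (by linarith [hθ j hj]))

theorem sum_mul_sin_sub_nonneg_of_le (hc : ∀ j ∈ s, 0 ≤ c j)
    (hθ : ∀ j ∈ s, x ≤ θ j ∧ θ j ≤ x + π) :
    0 ≤ ∑ j ∈ s, c j * sin (θ j - x) :=
  sum_nonneg fun j hj => mul_nonneg (hc j hj)
    (sin_nonneg_of_nonneg_of_le_pi (by linarith [hθ j hj]) (by linarith [hθ j hj]))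

end CouplingSums

theorem rate_diff_nonpos_of_eq_freq_general (n : ℕ)
    (G : SimpleGraph (Fin n)) [DecidableRel G.Adj]
    (ω : Fin n → ℝ) (K : Fin n → Fin n → ℝ)
    (hKnn : ∀ i j, 0 ≤ K i j)
    (φ : Fin n → ℝ) (k l : Fin n)
    (hω : ω k = ω l)
    (hφ : ∀ i, φ l ≤ φ i ∧ φ i ≤ φ k)
    (hπ : φ k - φ l < π) :
    (ω k + ∑ j ∈ G.neighborFinset k, K k j / n * Real.sin (φ j - φ k))
      - (ω l + ∑ j ∈ G.neighborFinset l, K l j / n * Real.sin (φ j - φ l)) ≤ 0 := by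
  have hK (i j : Fin n) : 0 ≤ K i j / n := div_nonneg (hKnn i j) n.cast_nonneg
  have hk := sum_mul_sin_sub_nonpos_of_le (G.neighborFinset k) (fun j _ => hK k j)
    (θ := φ) fun j _ => ⟨by linarith [hφ j], (hφ j).2⟩
  have hl := sum_mul_sin_sub_nonneg_of_le (G.neighborFinset l) (fun j _ => hK l j)
    (θ := φ) fun j _ => ⟨(hφ j).1, by linarith [hφ j]⟩
  linarith

theorem rate_diff_nonpos_of_eq_freq (n : ℕ) (hn : 0 < n)
    (G : SimpleGraph (Fin n)) [DecidableRel G.Adj]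
    (ω : Fin n → ℝ) (K : Fin n → Fin n → ℝ)
    (hKnn : ∀ i j, 0 ≤ K i j) (hKsym : ∀ i j, K i j = K j i)
    (φ : Fin n → ℝ) (k l : Fin n)
    (hadj : G.Adj k l) (hω : ω k = ω l)
    (hφ : ∀ i, φ l ≤ φ i ∧ φ i ≤ φ k)
    (h0 : 0 < φ k - φ l) (hπ : φ k - φ l < π) :
    (ω k + ∑ j ∈ G.neighborFinset k, K k j / n * Real.sin (φ j - φ k))
      - (ω l + ∑ j ∈ G.neighborFinset l, K l j / n * Real.sin (φ j - φ l)) ≤ 0 :=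
  rate_diff_nonpos_of_eq_freq_general n G ω K hKnn φ k l hω hφ hπ
end
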